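/- Fix β > 0 and γ > 0. Then the map ρ ↦ f(γ,β,ρ) is strictly increasing on the interval (0, β/γ) and strictly decreasing on the interval (β/γ, ∞). -/

import Mathlib

/-!
The map `ρ ↦ g(β,ρ)` is a strictly decreasing map of `(0, ∞)` into itself. Eliminating `ρ`
with the fixed-point equation of `g` turns `f` into the rational function
`h(x) = γ((1+x)² - βx²) / (β(γ + (1+x)²))` (`sinrProfile`) of `g` alone. The difference
`h(a) - h(b)` has the sign of `(a - b)·M(a,b)` with `M(a,b) = 2γ + (γ - γβ - β)(a+b) - 2βab`
(`sinrSlope`), and at the critical value `g₀ = g(β, β/γ)` the fixed-point equation gives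
`g₀·M(a,b) = (g₀ - a)(γ + βbg₀) + (g₀ - b)(γ + βag₀)`. Hence `h` increases on `[0, g₀]` and
decreases on `[g₀, ∞)`, and composing with the decreasing `g` swaps the two regimes around
`ρ = β/γ`.
-/

/-- The deterministic equivalent `g(β,ρ)`: the unique positive solution of
`g·(ρ + β/(1+g)) = 1`, given in closed form. -/
noncomputable def gfun (β ρ : ℝ) : ℝ :=
  ((1 - ρ - β) + Real.sqrt ((ρ + β - 1) ^ 2 + 4 * ρ)) / (2 * ρ)

/-- The limiting SINR coefficient `f(γ,β,ρ)` at effective SNR γ. -/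
noncomputable def ffun (γ β ρ : ℝ) : ℝ :=
  gfun β ρ * (γ + (γ * ρ / β) * (1 + gfun β ρ) ^ 2) / (γ + (1 + gfun β ρ) ^ 2)

open Set

noncomputable def sinrProfile (γ β x : ℝ) : ℝ :=
  γ * ((1 + x) ^ 2 - β * x ^ 2) / (β * (γ + (1 + x) ^ 2))

section gfun

variable {β ρ : ℝ}

lemma gfun_pos (hρ : 0 < ρ) : 0 < gfun β ρ := by
  have hsqrt : |ρ + β - 1| < Real.sqrt ((ρ + β - 1) ^ 2 + 4 * ρ) := by
    rw [← Real.sqrt_sq_eq_abs]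
    exact Real.sqrt_lt_sqrt (sq_nonneg _) (by linarith)
  have := le_abs_self (ρ + β - 1)
  exact div_pos (by linarith) (by linarith)

lemma gfun_quadratic (hρ : 0 < ρ) :
    ρ * gfun β ρ ^ 2 + (ρ + β - 1) * gfun β ρ = 1 := by
  have hsq : Real.sqrt ((ρ + β - 1) ^ 2 + 4 * ρ) ^ 2 = (ρ + β - 1) ^ 2 + 4 * ρ :=
    Real.sq_sqrt (by positivity)
  unfold gfun
  generalize Real.sqrt ((ρ + β - 1) ^ 2 + 4 * ρ) = s at hsq ⊢
  field_simp
  linear_combination hsq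

lemma gfun_strictAntiOn (hβ : 0 < β) : StrictAntiOn (gfun β) (Ioi 0) := by
  intro ρ₁ (hρ₁ : 0 < ρ₁) ρ₂ (hρ₂ : 0 < ρ₂) h12
  have h₁ := gfun_quadratic (β := β) hρ₁
  have h₂ := gfun_quadratic (β := β) hρ₂
  have ha := gfun_pos (β := β) hρ₁
  set a := gfun β ρ₁
  set b := gfun β ρ₂
  by_contra! hab
  have hdiff : (1 + a) * (1 + b) * (ρ₂ * b - ρ₁ * a) = β * (a - b) := by
    linear_combination (1 + a) * h₂ - (1 + b) * h₁
  have hlt : ρ₁ * a < ρ₂ * b := mul_lt_mul h12 hab ha hρ₂.le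
  have hpos : 0 < (1 + a) * (1 + b) * (ρ₂ * b - ρ₁ * a) :=
    mul_pos (mul_pos (by linarith) (by linarith)) (sub_pos.2 hlt)
  linarith [mul_nonpos_of_nonneg_of_nonpos hβ.le (sub_nonpos.2 hab)]

lemma ffun_eq_sinrProfile (γ : ℝ) (hβ : β ≠ 0) (hρ : 0 < ρ) :
    ffun γ β ρ = sinrProfile γ β (gfun β ρ) := by
  have hnum : gfun β ρ * (γ + γ * ρ / β * (1 + gfun β ρ) ^ 2)
      = γ * ((1 + gfun β ρ) ^ 2 - β * gfun β ρ ^ 2) / β := by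
    field_simp
    linear_combination γ * (1 + gfun β ρ) * gfun_quadratic (β := β) hρ
  rw [ffun, hnum, div_div, sinrProfile]

end gfun

noncomputable def sinrSlope (γ β a b : ℝ) : ℝ :=
  2 * γ + (γ - γ * β - β) * (a + b) - 2 * β * a * b

section sinrProfile

variable {γ β g₀ : ℝ}

lemma sinrProfile_sub_sinrProfile (hγ : 0 < γ) (hβ : β ≠ 0) (a b : ℝ) :
    sinrProfile γ β a - sinrProfile γ β b
      = γ * (a - b) * sinrSlope γ β a b / (β * ((γ + (1 + a) ^ 2) * (γ + (1 + b) ^ 2))) := by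
  have ha : γ + (1 + a) ^ 2 ≠ 0 := by positivity
  have hb : γ + (1 + b) ^ 2 ≠ 0 := by positivity
  unfold sinrProfile sinrSlope
  field_simp
  ring

variable (hcrit : β * g₀ ^ 2 + (β + β * γ - γ) * g₀ = γ)
include hcrit

lemma mul_sinrSlope_of_critical (a b : ℝ) :
    g₀ * sinrSlope γ β a b = (g₀ - a) * (γ + β * b * g₀) + (g₀ - b) * (γ + β * a * g₀) := by
  unfold sinrSlope
  linear_combination (-(a + b)) * hcrit

variable (hg₀ : 0 < g₀)
include hg₀

lemma sinrProfile_strictMonoOn (hγ : 0 < γ) (hβ : 0 < β) :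
    StrictMonoOn (sinrProfile γ β) (Icc 0 g₀) := by
  intro b ⟨hb, hbg₀⟩ a ⟨ha, hag₀⟩ hba
  have hM : 0 < g₀ * sinrSlope γ β a b := by
    rw [mul_sinrSlope_of_critical hcrit]
    exact add_pos_of_nonneg_of_pos (mul_nonneg (by linarith) (by positivity))
      (mul_pos (by linarith) (by positivity))
  rw [← sub_pos, sinrProfile_sub_sinrProfile hγ hβ.ne']
  exact div_pos (mul_pos (mul_pos hγ (by linarith)) (pos_of_mul_pos_right hM hg₀.le))
    (by positivity)

lemma sinrProfile_strictAntiOn (hγ : 0 < γ) (hβ : 0 < β) :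
    StrictAntiOn (sinrProfile γ β) (Ici g₀) := by
  intro b (hb : g₀ ≤ b) a (ha : g₀ ≤ a) hba
  have hb₀ : 0 < γ + β * b * g₀ := add_pos hγ (mul_pos (mul_pos hβ (hg₀.trans_le hb)) hg₀)
  have ha₀ : 0 < γ + β * a * g₀ := add_pos hγ (mul_pos (mul_pos hβ (hg₀.trans_le ha)) hg₀)
  have hM : g₀ * sinrSlope γ β a b < 0 := by
    rw [mul_sinrSlope_of_critical hcrit]
    exact add_neg_of_neg_of_nonpos (mul_neg_of_neg_of_pos (by linarith) hb₀)
      (mul_nonpos_of_nonpos_of_nonneg (by linarith) ha₀.le)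
  rw [← sub_neg, sinrProfile_sub_sinrProfile hγ hβ.ne']
  exact div_neg_of_neg_of_pos
    (mul_neg_of_pos_of_neg (mul_pos hγ (by linarith)) (neg_of_mul_neg_right hM hg₀.le))
    (by positivity)

end sinrProfile

/-- Fix β > 0 and γ > 0. Then ρ ↦ f(γ,β,ρ) is strictly
increasing on (0, β/γ) and strictly decreasing on (β/γ, ∞). -/
theorem ffun_strictMono_strictAnti (β γ : ℝ) (hβ : 0 < β) (hγ : 0 < γ) :
    StrictMonoOn (fun ρ => ffun γ β ρ) (Set.Ioo 0 (β / γ)) ∧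
    StrictAntiOn (fun ρ => ffun γ β ρ) (Set.Ioi (β / γ)) := by
  have hρ₀ : 0 < β / γ := div_pos hβ hγ
  set g₀ := gfun β (β / γ)
  have hg₀ : 0 < g₀ := gfun_pos hρ₀
  have hcrit : β * g₀ ^ 2 + (β + β * γ - γ) * g₀ = γ := by
    have := gfun_quadratic (β := β) hρ₀
    field_simp at this
    linear_combination this
  have hg := gfun_strictAntiOn hβ
  have hf : EqOn (sinrProfile γ β ∘ gfun β) (fun ρ => ffun γ β ρ) (Ioi 0) :=
    fun ρ hρ => (ffun_eq_sinrProfile γ hβ.ne' hρ).symm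
  have hlow : MapsTo (gfun β) (Ioo 0 (β / γ)) (Ici g₀) :=
    fun ρ hρ => hg.antitoneOn hρ.1 hρ₀ hρ.2.le
  have hhigh : MapsTo (gfun β) (Ioi (β / γ)) (Icc 0 g₀) :=
    fun ρ (hρ : β / γ < ρ) =>
      ⟨(gfun_pos (hρ₀.trans hρ)).le, hg.antitoneOn hρ₀ (hρ₀.trans hρ) hρ.le⟩
  exact ⟨((sinrProfile_strictAntiOn hcrit hg₀ hγ hβ).comp
      (hg.mono Ioo_subset_Ioi_self) hlow).congr (hf.mono Ioo_subset_Ioi_self),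
    ((sinrProfile_strictMonoOn hcrit hg₀ hγ hβ).comp_strictAntiOn
      (hg.mono (Ioi_subset_Ioi hρ₀.le)) hhigh).congr (hf.mono (Ioi_subset_Ioi hρ₀.le))⟩
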